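/- arXiv:2604.07794 — 8 statements merged into one kernel-verified Lean document; each statement's English description precedes it below -/
import Mathlib

section
/- Let H = (V, E) be a hypergraph with a δ-orientation and let s = u_0, e_0, u_1, e_1, …, e_{l−1}, u_l = t be a hyperpath whose vertices u_0, …, u_l are pairwise distinct and whose hyperedges e_0, …, e_{l−1} are pairwise distinct. Define a new head assignment by Hd'(e_i) = (Hd(e_i) \ {u_{i+1}}) ∪ {u_i} for each 0 ≤ i < l and Hd'(e) = Hd(e) for all other hyperedges. Then Hd' is again a δ-orientation of H, and its indegrees satisfy d⃗'_s = d⃗_s + 1, d⃗'_t = d⃗_t − 1, and d⃗'_v = d⃗_v for every vertex v ∉ {s, t}. -/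
open Finset

section Defs

variable {V : Type*}

/-- A `δ`-orientation of a hypergraph with hyperedge set `E`: each hyperedge `e ∈ E`
gets a head set `Hd e ⊆ e` with `|Hd e| = min δ |e|`. -/
def IsOrientation [DecidableEq V] (E : Finset (Finset V)) (δ : ℕ)
    (Hd : Finset V → Finset V) : Prop :=
  ∀ e ∈ E, Hd e ⊆ e ∧ (Hd e).card = min δ e.card

/-- The indegree of a vertex `u`: the number of hyperedges whose head set contains `u`. -/
def indeg [DecidableEq V] (E : Finset (Finset V)) (Hd : Finset V → Finset V)
    (u : V) : ℕ :=
  (E.filter fun e => u ∈ Hd e).card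

/-- `Reaches E Hd s t`: there is a hyperpath `s = u 0, e 0, u 1, …, e (l-1), u l = t`
(`l ≥ 1`) with `u i` a tail vertex of `e i` and `u (i+1)` a head vertex of `e i`. -/
def Reaches (E : Finset (Finset V)) (Hd : Finset V → Finset V) (s t : V) : Prop :=
  ∃ (l : ℕ) (u : ℕ → V) (e : ℕ → Finset V), 1 ≤ l ∧ u 0 = s ∧ u l = t ∧
    ∀ i < l, e i ∈ E ∧ u i ∈ e i ∧ u i ∉ Hd (e i) ∧ u (i + 1) ∈ Hd (e i)

/-- An egalitarian `δ`-orientation: a `δ`-orientation admitting no reversible hyperpath,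
i.e. no hyperpath `s ⇝ t` with `indeg t - indeg s ≥ 2`. -/
def Egalitarian [DecidableEq V] (E : Finset (Finset V)) (δ : ℕ)
    (Hd : Finset V → Finset V) : Prop :=
  IsOrientation E δ Hd ∧
    ∀ s t : V, Reaches E Hd s t → indeg E Hd t < indeg E Hd s + 2

/-- `Sk E Hd k`: the set of vertices of indegree at least `k`. -/
def Sk [Fintype V] [DecidableEq V] (E : Finset (Finset V))
    (Hd : Finset V → Finset V) (k : ℕ) : Finset V :=
  Finset.univ.filter fun u => k ≤ indeg E Hd u

open Classical in
/-- The `(k,δ)`-dense subhypergraph (as a vertex set): `S_k` together with all vertices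
that can reach some vertex of `S_k` via a hyperpath. -/
noncomputable def denseSet [Fintype V] [DecidableEq V] (E : Finset (Finset V))
    (Hd : Finset V → Finset V) (k : ℕ) : Finset V :=
  Finset.univ.filter fun u =>
    k ≤ indeg E Hd u ∨ ∃ s, k ≤ indeg E Hd s ∧ Reaches E Hd u s

/-- `E(X)`: the hyperedges entirely contained in `X`. -/
def edgesIn [DecidableEq V] (E : Finset (Finset V)) (X : Finset V) : Finset (Finset V) :=
  E.filter fun e => e ⊆ X

/-- Indegree-based density `ρ_d(X) = (Σ_{x∈X} d⃗_x)/|X|`. -/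
noncomputable def rhod [DecidableEq V] (E : Finset (Finset V))
    (Hd : Finset V → Finset V) (X : Finset V) : ℝ :=
  (∑ x ∈ X, (indeg E Hd x : ℝ)) / (X.card : ℝ)

/-- Degree-density `ρ(X) = (Σ_{x∈X} d_x(X))/|X|`, where `d_x(X)` counts the hyperedges
of `E(X)` containing `x`. -/
noncomputable def rho [DecidableEq V] (E : Finset (Finset V)) (X : Finset V) : ℝ :=
  (∑ x ∈ X, (((edgesIn E X).filter fun e => x ∈ e).card : ℝ)) / (X.card : ℝ)

/-- Internalization coefficient `θ(X) = (Σ_{e∈E(X)} |Hd e|)/(Σ_{x∈X} d⃗_x)`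
(equal to `0` when the denominator vanishes, by convention of real division). -/
noncomputable def theta [DecidableEq V] (E : Finset (Finset V))
    (Hd : Finset V → Finset V) (X : Finset V) : ℝ :=
  (∑ e ∈ edgesIn E X, ((Hd e).card : ℝ)) / (∑ x ∈ X, (indeg E Hd x : ℝ))

/-- `f_k = |S_k| / |D_{k,δ}|`. -/
noncomputable def fk [Fintype V] [DecidableEq V] (E : Finset (Finset V))
    (Hd : Finset V → Finset V) (k : ℕ) : ℝ :=
  ((Sk E Hd k).card : ℝ) / ((denseSet E Hd k).card : ℝ)

/-- The degree `d_x` of a vertex: the number of hyperedges containing it. -/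
def degv [DecidableEq V] (E : Finset (Finset V)) (x : V) : ℕ :=
  (E.filter fun e => x ∈ e).card

/-- `vol(X) = Σ_{x∈X} d_x`. -/
def vol [DecidableEq V] (E : Finset (Finset V)) (X : Finset V) : ℕ :=
  ∑ x ∈ X, degv E x

/-- `∂(X)`: the number of hyperedges meeting both `X` and its complement. -/
def boundaryCount [DecidableEq V] (E : Finset (Finset V)) (X : Finset V) : ℕ :=
  (E.filter fun e => (e ∩ X).Nonempty ∧ (e \ X).Nonempty).card

/-- Conductance `φ(X) = ∂(X)/vol(X)`. -/
noncomputable def phi [DecidableEq V] (E : Finset (Finset V)) (X : Finset V) : ℝ :=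
  (boundaryCount E X : ℝ) / (vol E X : ℝ)

/-- Average degree `d̄(X) = vol(X)/|X|`. -/
noncomputable def dbar [DecidableEq V] (E : Finset (Finset V)) (X : Finset V) : ℝ :=
  (vol E X : ℝ) / (X.card : ℝ)

/-- Average size `r̄(X)` of the hyperedges internal to `X`. -/
noncomputable def rbar [DecidableEq V] (E : Finset (Finset V)) (X : Finset V) : ℝ :=
  (∑ e ∈ edgesIn E X, (e.card : ℝ)) / ((edgesIn E X).card : ℝ)

end Defs

/-- reversing a hyperpath with pairwise distinct vertices and pairwise
distinct hyperedges yields again a `δ`-orientation, increases the indegree of `s` by one,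
decreases the indegree of `t` by one, and leaves all other indegrees unchanged. -/
theorem stmt1 {V : Type*} [DecidableEq V]
    (E : Finset (Finset V)) (hE : ∀ e ∈ E, e.Nonempty)
    (δ : ℕ) (hδ : 1 ≤ δ)
    (Hd : Finset V → Finset V) (hor : IsOrientation E δ Hd)
    (s t : V) (l : ℕ) (hl : 1 ≤ l) (u : ℕ → V) (e : ℕ → Finset V)
    (hu0 : u 0 = s) (hul : u l = t)
    (hpath : ∀ i < l, e i ∈ E ∧ u i ∈ e i ∧ u i ∉ Hd (e i) ∧ u (i + 1) ∈ Hd (e i))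
    (huinj : ∀ i ≤ l, ∀ j ≤ l, u i = u j → i = j)
    (heinj : ∀ i < l, ∀ j < l, e i = e j → i = j)
    (Hd' : Finset V → Finset V)
    (hHd'path : ∀ i < l, Hd' (e i) = (Hd (e i) \ {u (i + 1)}) ∪ {u i})
    (hHd'other : ∀ f, (∀ i < l, f ≠ e i) → Hd' f = Hd f) :
    IsOrientation E δ Hd' ∧
      indeg E Hd' s = indeg E Hd s + 1 ∧
      indeg E Hd' t = indeg E Hd t - 1 ∧
      ∀ v, v ≠ s → v ≠ t → indeg E Hd' v = indeg E Hd v := by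
  classical
  -- key membership characterization
  have key : ∀ f ∈ E, ∀ v, v ∈ Hd' f ↔
      ((v ∈ Hd f ∧ ∀ i < l, f = e i → v ≠ u (i + 1)) ∨ ∃ i, i < l ∧ f = e i ∧ v = u i) := by
    intro f hf v
    by_cases h : ∃ i, i < l ∧ f = e i
    · obtain ⟨i, hi, rfl⟩ := h
      rw [hHd'path i hi]
      simp only [Finset.mem_union, Finset.mem_sdiff, Finset.mem_singleton]
      constructor
      · rintro (⟨hv, hne⟩ | rfl)
        · left
          refine ⟨hv, ?_⟩
          intro j hj hje
          have : i = j := heinj i hi j hj hje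
          subst this; exact hne
        · right; exact ⟨i, hi, rfl, rfl⟩
      · rintro (⟨hv, hne⟩ | ⟨j, hj, hje, rfl⟩)
        · left; exact ⟨hv, hne i hi rfl⟩
        · have : j = i := heinj j hj i hi hje.symm
          subst this; right; rfl
    · push_neg at h
      rw [hHd'other f h]
      constructor
      · intro hv; left
        exact ⟨hv, fun i hi hfe => absurd hfe (h i hi)⟩
      · rintro (⟨hv, _⟩ | ⟨i, hi, hfe, _⟩)
        · exact hv
        · exact absurd hfe (h i hi)
  refine ⟨?_, ?_, ?_, ?_⟩
  · -- orientation
    intro f hf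
    by_cases h : ∃ i, i < l ∧ f = e i
    · obtain ⟨i, hi, rfl⟩ := h
      obtain ⟨hsub, hcard⟩ := hor (e i) hf
      obtain ⟨hE0, huie, hunot, hmem⟩ := hpath i hi
      rw [hHd'path i hi]
      constructor
      · intro x hx
        rcases Finset.mem_union.1 hx with hx | hx
        · exact hsub (Finset.mem_sdiff.1 hx).1
        · rw [Finset.mem_singleton.1 hx]; exact huie
      · have h1 : u i ∉ Hd (e i) \ {u (i + 1)} := fun hx => hunot (Finset.mem_sdiff.1 hx).1
        have hpos : 0 < (Hd (e i)).card := Finset.card_pos.2 ⟨_, hmem⟩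
        rw [Finset.union_comm, ← Finset.insert_eq, Finset.card_insert_of_notMem h1,
          Finset.sdiff_singleton_eq_erase, Finset.card_erase_of_mem hmem]
        omega
    · push_neg at h
      rw [hHd'other f h]
      exact hor f hf
  · -- indegree of s
    have hs0 : s ∉ Hd (e 0) := by rw [← hu0]; exact (hpath 0 hl).2.2.1
    have hfilter : E.filter (fun f => s ∈ Hd' f) = insert (e 0) (E.filter fun f => s ∈ Hd f) := by
      ext f
      simp only [Finset.mem_filter, Finset.mem_insert]
      constructor
      · rintro ⟨hfE, hv⟩
        rw [key f hfE s] at hv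
        rcases hv with ⟨hv, _⟩ | ⟨i, hi, rfl, hsu⟩
        · right; exact ⟨hfE, hv⟩
        · have : i = 0 := huinj i (le_of_lt hi) 0 (Nat.zero_le l) (hsu.symm.trans hu0.symm)
          left; rw [this]
      · rintro (rfl | ⟨hfE, hv⟩)
        · have hE0 := (hpath 0 hl).1
          refine ⟨hE0, ?_⟩
          rw [key _ hE0 s]
          right; exact ⟨0, hl, rfl, hu0.symm⟩
        · refine ⟨hfE, ?_⟩
          rw [key f hfE s]
          left; refine ⟨hv, ?_⟩
          intro i hi _ hsu
          have : 0 = i + 1 := huinj 0 (Nat.zero_le l) (i + 1) hi (hu0.trans hsu)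
          exact Nat.succ_ne_zero i this.symm
    have hnm : e 0 ∉ E.filter fun f => s ∈ Hd f := by
      simp only [Finset.mem_filter, not_and]
      exact fun _ => hs0
    unfold indeg
    rw [hfilter, Finset.card_insert_of_notMem hnm]
  · -- indegree of t
    obtain ⟨m, rfl⟩ : ∃ m, l = m + 1 := ⟨l - 1, (Nat.succ_pred_eq_of_pos hl).symm⟩
    have hmlt : m < m + 1 := Nat.lt_succ_self m
    have htm : t ∈ Hd (e m) := by rw [← hul]; exact (hpath m hmlt).2.2.2
    have hfilter : E.filter (fun f => t ∈ Hd' f) = (E.filter fun f => t ∈ Hd f).erase (e m) := by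
      ext f
      simp only [Finset.mem_filter, Finset.mem_erase]
      constructor
      · rintro ⟨hfE, hv⟩
        rw [key f hfE t] at hv
        rcases hv with ⟨hv, hneq⟩ | ⟨i, hi, rfl, htu⟩
        · exact ⟨fun hfe => hneq m hmlt hfe hul.symm, hfE, hv⟩
        · exfalso
          have : i = m + 1 := huinj i (le_of_lt hi) (m + 1) le_rfl (htu.symm.trans hul.symm)
          omega
      · rintro ⟨hfne, hfE, hv⟩
        refine ⟨hfE, ?_⟩
        rw [key f hfE t]
        left; refine ⟨hv, ?_⟩
        intro i hi hfe htu
        have h1 : i + 1 = m + 1 := huinj (i + 1) hi (m + 1) le_rfl (htu.symm.trans hul.symm)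
        apply hfne
        rw [hfe]
        congr 1
        omega
    have hmm : e m ∈ E.filter fun f => t ∈ Hd f :=
      Finset.mem_filter.2 ⟨(hpath m hmlt).1, htm⟩
    unfold indeg
    rw [hfilter, Finset.card_erase_of_mem hmm]
  · -- other vertices
    intro v hvs hvt
    by_cases hvu : ∃ j, j ≤ l ∧ v = u j
    · obtain ⟨j, hjl, rfl⟩ := hvu
      have hj0 : j ≠ 0 := fun h => hvs (by rw [h, hu0])
      have hjne : j ≠ l := fun h => hvt (by rw [h, hul])
      obtain ⟨k, rfl⟩ : ∃ k, j = k + 1 := ⟨j - 1, (Nat.succ_pred_eq_of_pos (Nat.pos_of_ne_zero hj0)).symm⟩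
      have hkl : k < l := lt_of_lt_of_le (Nat.lt_succ_self k) hjl
      have hk1l : k + 1 < l := lt_of_le_of_ne hjl hjne
      have hmem : u (k + 1) ∈ Hd (e k) := (hpath k hkl).2.2.2
      have hnmem : u (k + 1) ∉ Hd (e (k + 1)) := (hpath (k + 1) hk1l).2.2.1
      have hfilter : E.filter (fun f => u (k + 1) ∈ Hd' f)
          = insert (e (k + 1)) ((E.filter fun f => u (k + 1) ∈ Hd f).erase (e k)) := by
        ext f
        simp only [Finset.mem_filter, Finset.mem_insert, Finset.mem_erase]
        constructor
        · rintro ⟨hfE, hv⟩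
          rw [key f hfE _] at hv
          rcases hv with ⟨hv, hneq⟩ | ⟨i, hi, rfl, hvu'⟩
          · right
            exact ⟨fun hfe => hneq k hkl hfe rfl, hfE, hv⟩
          · have : k + 1 = i := huinj (k + 1) hjl i (le_of_lt hi) hvu'
            left; rw [this]
        · rintro (rfl | ⟨hfne, hfE, hv⟩)
          · have hE1 := (hpath (k + 1) hk1l).1
            refine ⟨hE1, ?_⟩
            rw [key _ hE1 _]
            right; exact ⟨k + 1, hk1l, rfl, rfl⟩
          · refine ⟨hfE, ?_⟩
            rw [key f hfE _]
            left; refine ⟨hv, ?_⟩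
            intro i hi hfe hvu'
            have h1 : k + 1 = i + 1 := huinj (k + 1) hjl (i + 1) hi hvu'
            apply hfne
            rw [hfe]
            congr 1
            omega
      have hkm : e k ∈ E.filter fun f => u (k + 1) ∈ Hd f :=
        Finset.mem_filter.2 ⟨(hpath k hkl).1, hmem⟩
      have hek : e (k + 1) ≠ e k := fun h => by
        have := heinj (k + 1) hk1l k hkl h
        omega
      have hk1nm : e (k + 1) ∉ (E.filter fun f => u (k + 1) ∈ Hd f).erase (e k) := by
        intro h
        exact hnmem (Finset.mem_filter.1 (Finset.mem_of_mem_erase h)).2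
      have hpos : 0 < (E.filter fun f => u (k + 1) ∈ Hd f).card :=
        Finset.card_pos.2 ⟨_, hkm⟩
      unfold indeg
      rw [hfilter, Finset.card_insert_of_notMem hk1nm, Finset.card_erase_of_mem hkm]
      omega
    · push_neg at hvu
      have hfilter : E.filter (fun f => v ∈ Hd' f) = E.filter fun f => v ∈ Hd f := by
        ext f
        simp only [Finset.mem_filter]
        constructor
        · rintro ⟨hfE, hv⟩
          rw [key f hfE v] at hv
          rcases hv with ⟨hv, _⟩ | ⟨i, hi, _, hvi⟩
          · exact ⟨hfE, hv⟩
          · exact absurd hvi (hvu i (le_of_lt hi))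
        · rintro ⟨hfE, hv⟩
          refine ⟨hfE, ?_⟩
          rw [key f hfE v]
          left
          exact ⟨hv, fun i hi _ => hvu (i + 1) hi⟩
      unfold indeg
      rw [hfilter]
end

section
/- Every hypergraph H = (V, E) with V and E finite admits, for every integer δ ≥ 1, an egalitarian δ-orientation, i.e., a δ-orientation in which no reversible hyperpath exists. -/
open Finset

/-- Shortcut lemma: from a hyperpath of length `L` and indices `i < j ≤ L` satisfying a
compatibility condition, we get a shorter hyperpath with the same endpoints. -/
lemma path_shortcut {V : Type*} (E : Finset (Finset V)) (Hd : Finset V → Finset V)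
    (u : ℕ → V) (e : ℕ → Finset V) (L i j : ℕ)
    (hstep : ∀ k < L, e k ∈ E ∧ u k ∈ e k ∧ u k ∉ Hd (e k) ∧ u (k + 1) ∈ Hd (e k))
    (hij : i < j) (hjL : j ≤ L)
    (hcond : j < L → (e j ∈ E ∧ u i ∈ e j ∧ u i ∉ Hd (e j) ∧ u (j + 1) ∈ Hd (e j)))
    (hend : j = L → u i = u L) :
    ∃ u' e' : ℕ → _, u' 0 = u 0 ∧ u' (L - (j - i)) = u L ∧
      ∀ k < L - (j - i), e' k ∈ E ∧ u' k ∈ e' k ∧ u' k ∉ Hd (e' k) ∧ u' (k + 1) ∈ Hd (e' k) := by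
  refine ⟨fun k => if k ≤ i then u k else u (k + (j - i)),
          fun k => if k < i then e k else e (k + (j - i)), by simp, ?_, ?_⟩
  · by_cases h : L - (j - i) ≤ i
    · have hmi : L - (j - i) = i := by omega
      have hjL' : j = L := by omega
      rw [hmi]
      exact (if_pos (le_refl i)).trans (hend hjL')
    · simp only [if_neg h]
      congr 1
      omega
  · intro k hk
    rcases lt_trichotomy k i with hki | rfl | hki
    · have hkl : k < L := by omega
      simp only [if_pos (le_of_lt hki), if_pos hki, if_pos (Nat.succ_le_of_lt hki)]
      exact hstep k hkl
    · have hjL2 : j < L := by omega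
      obtain ⟨h1, h2, h3, h4⟩ := hcond hjL2
      have hej : k + (j - k) = j := by omega
      have huj : k + 1 + (j - k) = j + 1 := by omega
      simp only [if_neg (lt_irrefl k), le_refl, if_pos, hej,
        if_neg (by omega : ¬ k + 1 ≤ k), huj]
      exact ⟨h1, h2, h3, h4⟩
    · have hkl : k + (j - i) < L := by omega
      simp only [if_neg (by omega : ¬ k ≤ i), if_neg (by omega : ¬ k < i),
        if_neg (by omega : ¬ k + 1 ≤ i)]
      have := hstep (k + (j - i)) hkl
      have h1 : k + 1 + (j - i) = k + (j - i) + 1 := by omega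
      rw [h1]
      exact this

/-- every finite hypergraph admits, for every `δ ≥ 1`, an egalitarian
`δ`-orientation (a `δ`-orientation with no reversible hyperpath). -/
theorem stmt3 {V : Type*} [Fintype V] [DecidableEq V]
    (E : Finset (Finset V)) (hE : ∀ e ∈ E, e.Nonempty)
    (δ : ℕ) (hδ : 1 ≤ δ) :
    ∃ Hd : Finset V → Finset V, Egalitarian E δ Hd := by
  classical
  -- choose an orientation minimizing the sum of squared indegrees
  have hex : ∃ n : ℕ, ∃ Hd, IsOrientation E δ Hd ∧ (∑ v : V, (indeg E Hd v) ^ 2) = n := by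
    choose f hf using fun (s : Finset V) => s.exists_subset_card_eq (n := min δ s.card) (min_le_right _ _)
    exact ⟨_, f, fun e _ => hf e, rfl⟩
  obtain ⟨Hd, hor, hct⟩ := Nat.find_spec hex
  have hmin : ∀ Hd', IsOrientation E δ Hd' →
      (∑ v : V, (indeg E Hd v) ^ 2) ≤ ∑ v : V, (indeg E Hd' v) ^ 2 := by
    intro Hd' h'
    rw [hct]
    exact Nat.find_min' hex ⟨Hd', h', rfl⟩
  refine ⟨Hd, hor, ?_⟩
  intro s t hst
  by_contra hcon
  push_neg at hcon
  have hne : s ≠ t := by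
    intro h; rw [h] at hcon; omega
  -- take a shortest hyperpath from s to t
  have hstE : ∃ l : ℕ, ∃ (u : ℕ → V) (e : ℕ → Finset V), 1 ≤ l ∧ u 0 = s ∧ u l = t ∧
      ∀ i < l, e i ∈ E ∧ u i ∈ e i ∧ u i ∉ Hd (e i) ∧ u (i + 1) ∈ Hd (e i) := hst
  obtain ⟨u, e, hL1, hu0, huL, hstep⟩ := Nat.find_spec hstE
  set L := Nat.find hstE with hLdef
  -- injectivity of vertices along the shortest path
  have huinj : ∀ i j, i < j → j ≤ L → u i ≠ u j := by
    intro i j hij hjL hEq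
    have hne2 : ¬(i = 0 ∧ j = L) := by
      rintro ⟨rfl, rfl⟩
      exact hne (hu0 ▸ huL ▸ hEq)
    have hm1 : 1 ≤ L - (j - i) := by omega
    have hmL : L - (j - i) < L := by omega
    obtain ⟨u', e', h0', hL', hstep'⟩ := path_shortcut E Hd u e L i j hstep hij hjL
      (fun hjL2 => by
        obtain ⟨h1, h2, h3, h4⟩ := hstep j hjL2
        exact ⟨h1, hEq ▸ h2, hEq ▸ h3, h4⟩)
      (fun hjL2 => by rw [hEq, hjL2])
    exact Nat.find_min hstE hmL ⟨u', e', hm1, h0'.trans hu0, hL'.trans huL, hstep'⟩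
  -- injectivity of edges along the shortest path
  have heinj : ∀ i j, i < j → j < L → e i ≠ e j := by
    intro i j hij hjL hEq
    have hm1 : 1 ≤ L - (j - i) := by omega
    have hmL : L - (j - i) < L := by omega
    obtain ⟨u', e', h0', hL', hstep'⟩ := path_shortcut E Hd u e L i j hstep hij (le_of_lt hjL)
      (fun _ => by
        obtain ⟨h1, h2, h3, _⟩ := hstep i (lt_trans hij hjL)
        obtain ⟨_, _, _, h4⟩ := hstep j hjL
        exact ⟨hEq ▸ h1, hEq ▸ h2, hEq ▸ h3, h4⟩)
      (fun h => absurd h (by omega))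
    exact Nat.find_min hstE hmL ⟨u', e', hm1, h0'.trans hu0, hL'.trans huL, hstep'⟩
  have heinj' : ∀ i j, i < L → j < L → e i = e j → i = j := by
    intro i j hi hj hEq
    rcases lt_trichotomy i j with h | h | h
    · exact absurd hEq (heinj i j h hj)
    · exact h
    · exact absurd hEq.symm (heinj j i h hi)
  -- the flipped orientation
  set Hd' : Finset V → Finset V := fun x =>
    if h : ∃ i, i < L ∧ e i = x then
      insert (u h.choose) ((Hd x).erase (u (h.choose + 1))) else Hd x with hHd'def
  have key : ∀ i, i < L → Hd' (e i) = insert (u i) ((Hd (e i)).erase (u (i + 1))) := by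
    intro i hi
    have h : ∃ k, k < L ∧ e k = e i := ⟨i, hi, rfl⟩
    have hc := h.choose_spec
    have hci : h.choose = i := heinj' _ _ hc.1 hi hc.2
    simp only [hHd'def, dif_pos h, hci]
  have keyn : ∀ x, (¬ ∃ i, i < L ∧ e i = x) → Hd' x = Hd x := by
    intro x hx
    simp only [hHd'def, dif_neg hx]
  -- Hd' is an orientation
  have hor' : IsOrientation E δ Hd' := by
    intro x hx
    by_cases h : ∃ i, i < L ∧ e i = x
    · obtain ⟨i, hi, rfl⟩ := h
      rw [key i hi]
      obtain ⟨hsub, hcard⟩ := hor _ hx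
      obtain ⟨_, h3, h2, h1⟩ := hstep i hi
      constructor
      · intro y hy
        rcases Finset.mem_insert.mp hy with rfl | hy
        · exact h3
        · exact hsub (Finset.mem_of_mem_erase hy)
      · rw [Finset.card_insert_of_notMem (fun hc => h2 (Finset.mem_of_mem_erase hc)),
            Finset.card_erase_of_mem h1]
        have hpos : 1 ≤ (Hd (e i)).card := Finset.card_pos.mpr ⟨_, h1⟩
        omega
    · rw [keyn x h]
      exact hor x hx
  -- indegree change
  have hform : ∀ (H : Finset V → Finset V) (v : V),
      (indeg E H v : ℤ) = ∑ x ∈ E, (if v ∈ H x then (1 : ℤ) else 0) := by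
    intro H v
    rw [indeg, Finset.card_filter]
    push_cast
    rfl
  have hindeg : ∀ v, (indeg E Hd' v : ℤ) = (indeg E Hd v : ℤ)
      + (if v = s then 1 else 0) - (if v = t then 1 else 0) := by
    intro v
    have hFsub : (Finset.range L).image e ⊆ E := by
      intro x hx
      obtain ⟨i, hi, rfl⟩ := Finset.mem_image.mp hx
      exact (hstep i (Finset.mem_range.mp hi)).1
    have hdiff : ∑ x ∈ E, ((if v ∈ Hd' x then (1 : ℤ) else 0) - (if v ∈ Hd x then 1 else 0))
        = ∑ i ∈ Finset.range L,
            ((if v = u i then (1 : ℤ) else 0) - (if v = u (i + 1) then 1 else 0)) := by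
      rw [← Finset.sum_subset hFsub (by
        intro x _ hxF
        have hnx : ¬ ∃ i, i < L ∧ e i = x := by
          rintro ⟨i, hi, rfl⟩
          exact hxF (Finset.mem_image.mpr ⟨i, Finset.mem_range.mpr hi, rfl⟩)
        rw [keyn x hnx]
        ring)]
      rw [Finset.sum_image (by
        intro i hi j hj hEq
        exact heinj' i j (Finset.mem_range.mp hi) (Finset.mem_range.mp hj) hEq)]
      apply Finset.sum_congr rfl
      intro i hi
      have hi' := Finset.mem_range.mp hi
      obtain ⟨_, _, h2, h1⟩ := hstep i hi'
      have hne' : u i ≠ u (i + 1) := huinj i (i + 1) (by omega) (by omega)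
      rw [key i hi']
      by_cases hv1 : v = u i
      · subst hv1
        simp [h2, hne']
      · by_cases hv2 : v = u (i + 1)
        · subst hv2
          simp [h1, Ne.symm hne', hv1]
        · simp [hv1, hv2, Finset.mem_insert, Finset.mem_erase]
    have htel : ∑ i ∈ Finset.range L,
        ((if v = u i then (1 : ℤ) else 0) - (if v = u (i + 1) then 1 else 0))
        = (if v = u 0 then (1 : ℤ) else 0) - (if v = u L then 1 else 0) :=
      Finset.sum_range_sub' (fun i => if v = u i then (1 : ℤ) else 0) L
    rw [htel, hu0, huL] at hdiff
    rw [Finset.sum_sub_distrib, ← hform Hd', ← hform Hd] at hdiff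
    linarith
  -- the potential strictly decreases
  have hs' := hindeg s
  have ht' := hindeg t
  rw [if_pos rfl, if_neg hne] at hs'
  rw [if_neg (Ne.symm hne), if_pos rfl] at ht'
  have hsum : ∑ v ∈ ({s, t} : Finset V), ((indeg E Hd' v : ℤ) ^ 2 - (indeg E Hd v : ℤ) ^ 2)
      = ∑ v : V, ((indeg E Hd' v : ℤ) ^ 2 - (indeg E Hd v : ℤ) ^ 2) := by
    apply Finset.sum_subset (Finset.subset_univ _)
    intro v _ hv
    simp only [Finset.mem_insert, Finset.mem_singleton] at hv
    push_neg at hv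
    rw [hindeg v, if_neg hv.1, if_neg hv.2]
    ring
  rw [Finset.sum_pair hne] at hsum
  have hcon' : (indeg E Hd s : ℤ) + 2 ≤ (indeg E Hd t : ℤ) := by exact_mod_cast hcon
  have hdec : ∑ v : V, ((indeg E Hd' v : ℤ) ^ 2 - (indeg E Hd v : ℤ) ^ 2) ≤ -2 := by
    rw [← hsum, hs', ht']
    nlinarith
  have hle := hmin Hd' hor'
  have hle' : (∑ v : V, (indeg E Hd v : ℤ) ^ 2) ≤ ∑ v : V, (indeg E Hd' v : ℤ) ^ 2 := by
    have : ((∑ v : V, (indeg E Hd v) ^ 2 : ℕ) : ℤ) ≤ ((∑ v : V, (indeg E Hd' v) ^ 2 : ℕ) : ℤ) := by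
      exact_mod_cast hle
    push_cast at this
    exact this
  rw [Finset.sum_sub_distrib] at hdec
  linarith
end

section
/- Let H = (V, E) be a hypergraph, δ ≥ 1 an integer, and k a non-negative integer. For any two egalitarian δ-orientations of H, the (k,δ)-dense subhypergraphs computed from them coincide as vertex sets; that is, the (k,δ)-dense subhypergraph D_{k,δ} of H is unique, independent of the choice of egalitarian δ-orientation. -/
open Finset

section AuxProof

variable {V : Type*}

theorem aux_mem_denseSet [Fintype V] [DecidableEq V] {E : Finset (Finset V)}
    {Hd : Finset V → Finset V} {k : ℕ} {u : V} :
    u ∈ denseSet E Hd k ↔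
      k ≤ indeg E Hd u ∨ ∃ s, k ≤ indeg E Hd s ∧ Reaches E Hd u s := by
  classical
  simp [denseSet]

theorem aux_reaches_single {E : Finset (Finset V)} {Hd : Finset V → Finset V}
    {a b : V} {e : Finset V} (he : e ∈ E) (ha : a ∈ e) (ha' : a ∉ Hd e)
    (hb : b ∈ Hd e) : Reaches E Hd a b := by
  refine ⟨1, fun i => if i = 0 then a else b, fun _ => e, le_refl 1, rfl, by norm_num, ?_⟩
  intro i hi
  have : i = 0 := by omega
  subst this
  simpa [he, ha, ha'] using hb

theorem aux_reaches_prepend {E : Finset (Finset V)} {Hd : Finset V → Finset V}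
    {a b t : V} {e : Finset V} (he : e ∈ E) (ha : a ∈ e) (ha' : a ∉ Hd e)
    (hb : b ∈ Hd e) (h : Reaches E Hd b t) : Reaches E Hd a t := by
  obtain ⟨l, u, f, hl, h0, hlast, hstep⟩ := h
  refine ⟨l + 1, fun i => if i = 0 then a else u (i - 1),
    fun i => if i = 0 then e else f (i - 1), by omega, rfl, by simp [hlast], ?_⟩
  intro i hi
  rcases Nat.eq_zero_or_pos i with rfl | hpos
  · simpa [he, ha, ha', h0] using hb
  · have hi' : i - 1 < l := by omega
    obtain ⟨h1, h2, h3, h4⟩ := hstep (i - 1) hi'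
    have e1 : i ≠ 0 := by omega
    have e2 : i + 1 ≠ 0 := by omega
    have e3 : i + 1 - 1 = (i - 1) + 1 := by omega
    simp only [if_neg e1, if_neg e2, e3]
    exact ⟨h1, h2, h3, h4⟩

theorem aux_reaches_suffix {E : Finset (Finset V)} {Hd : Finset V → Finset V}
    {l : ℕ} {u : ℕ → V} {f : ℕ → Finset V}
    (hstep : ∀ i < l, f i ∈ E ∧ u i ∈ f i ∧ u i ∉ Hd (f i) ∧ u (i + 1) ∈ Hd (f i))
    {j : ℕ} (hj : j < l) : Reaches E Hd (u j) (u l) := by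
  refine ⟨l - j, fun i => u (j + i), fun i => f (j + i), by omega, by simp,
    congrArg u (by omega), ?_⟩
  intro i hi
  exact hstep (j + i) (by omega)

theorem aux_denseSet_closed [Fintype V] [DecidableEq V] {E : Finset (Finset V)}
    {Hd : Finset V → Finset V} {k : ℕ} {a b : V} {e : Finset V}
    (he : e ∈ E) (ha : a ∈ e) (ha' : a ∉ Hd e) (hb : b ∈ Hd e)
    (hbB : b ∈ denseSet E Hd k) : a ∈ denseSet E Hd k := by
  rw [aux_mem_denseSet] at hbB ⊢
  rcases hbB with h | ⟨s, hs, hr⟩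
  · exact Or.inr ⟨b, h, aux_reaches_single he ha ha' hb⟩
  · exact Or.inr ⟨s, hs, aux_reaches_prepend he ha ha' hb hr⟩

theorem aux_indeg_lb [Fintype V] [DecidableEq V] {E : Finset (Finset V)} {δ : ℕ}
    {Hd : Finset V → Finset V} {k : ℕ} (h : Egalitarian E δ Hd) {u : V}
    (hu : u ∈ denseSet E Hd k) : k ≤ indeg E Hd u + 1 := by
  rw [aux_mem_denseSet] at hu
  rcases hu with h' | ⟨s, hs, hr⟩
  · omega
  · have := h.2 u s hr; omega

theorem aux_sum_indeg [DecidableEq V] (E : Finset (Finset V))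
    (Hd : Finset V → Finset V) (X : Finset V) :
    ∑ u ∈ X, indeg E Hd u = ∑ e ∈ E, (Hd e ∩ X).card := by
  unfold indeg
  simp_rw [Finset.card_filter]
  rw [Finset.sum_comm]
  refine Finset.sum_congr rfl fun e _ => ?_
  rw [← Finset.card_filter]
  congr 1
  rw [Finset.inter_comm, ← Finset.filter_mem_eq_inter]

theorem aux_card_head_le [DecidableEq V] {e H₁ H₂ A B : Finset V}
    (hH₁ : H₁ ⊆ e) (hH₂ : H₂ ⊆ e) (hcard : H₁.card = H₂.card)
    (hA : (H₁ ∩ A).Nonempty → e \ A ⊆ H₁)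
    (hB : (H₂ ∩ B).Nonempty → e \ B ⊆ H₂) :
    (H₁ ∩ (A \ B)).card ≤ (H₂ ∩ (A \ B)).card := by
  by_cases h1 : (H₁ ∩ (A \ B)).Nonempty
  · have hA' : e \ A ⊆ H₁ := by
      obtain ⟨x, hx⟩ := h1
      rw [Finset.mem_inter, Finset.mem_sdiff] at hx
      exact hA ⟨x, Finset.mem_inter.mpr ⟨hx.1, hx.2.1⟩⟩
    by_cases h2 : (H₂ ∩ B).Nonempty
    · have hB' := hB h2
      apply Finset.card_le_card
      intro x hx
      rw [Finset.mem_inter] at hx ⊢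
      exact ⟨hB' (Finset.mem_sdiff.mpr ⟨hH₁ hx.1, (Finset.mem_sdiff.mp hx.2).2⟩), hx.2⟩
    · have hH2B : ∀ x ∈ H₂, x ∉ B := by
        intro x hx hxB
        exact h2 ⟨x, Finset.mem_inter.mpr ⟨hx, hxB⟩⟩
      have e1 : H₂ ∩ (A \ B) = H₂ ∩ A := by
        ext x
        simp only [Finset.mem_inter, Finset.mem_sdiff]
        exact ⟨fun h => ⟨h.1, h.2.1⟩, fun h => ⟨h.1, h.2, hH2B x h.1⟩⟩
      rw [e1]
      have key : (H₂ \ A).card ≤ (H₁ \ A).card := by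
        apply Finset.card_le_card
        intro x hx
        rw [Finset.mem_sdiff] at hx ⊢
        exact ⟨hA' (Finset.mem_sdiff.mpr ⟨hH₂ hx.1, hx.2⟩), hx.2⟩
      have c1 : (H₁ ∩ A).card + (H₁ \ A).card = H₁.card :=
        Finset.card_inter_add_card_sdiff H₁ A
      have c2 : (H₂ ∩ A).card + (H₂ \ A).card = H₂.card :=
        Finset.card_inter_add_card_sdiff H₂ A
      have c3 : (H₁ ∩ (A \ B)).card ≤ (H₁ ∩ A).card :=
        Finset.card_le_card (Finset.inter_subset_inter_left Finset.sdiff_subset)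
      omega
  · rw [Finset.not_nonempty_iff_eq_empty] at h1
    simp [h1]

theorem aux_card_head_lt [DecidableEq V] {e H₁ H₂ A B : Finset V}
    (hH₁ : H₁ ⊆ e) (hH₂ : H₂ ⊆ e) (hcard : H₁.card = H₂.card)
    (hA : (H₁ ∩ A).Nonempty → e \ A ⊆ H₁)
    (hB : (H₂ ∩ B).Nonempty → e \ B ⊆ H₂)
    {a b : V} (hae : a ∈ e) (haH : a ∉ H₁) (haA : a ∈ A) (haB : a ∉ B)
    (hbH : b ∈ H₁) (hbA : b ∈ A) (hbB : b ∈ B) :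
    (H₁ ∩ (A \ B)).card + 1 ≤ (H₂ ∩ (A \ B)).card := by
  have hA' : e \ A ⊆ H₁ := hA ⟨b, Finset.mem_inter.mpr ⟨hbH, hbA⟩⟩
  by_cases h2 : (H₂ ∩ B).Nonempty
  · have hB' := hB h2
    have hsub : insert a (H₁ ∩ (A \ B)) ⊆ H₂ ∩ (A \ B) := by
      intro x hx
      rw [Finset.mem_insert] at hx
      rcases hx with rfl | hx
      · exact Finset.mem_inter.mpr ⟨hB' (Finset.mem_sdiff.mpr ⟨hae, haB⟩),
          Finset.mem_sdiff.mpr ⟨haA, haB⟩⟩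
      · rw [Finset.mem_inter] at hx ⊢
        exact ⟨hB' (Finset.mem_sdiff.mpr ⟨hH₁ hx.1, (Finset.mem_sdiff.mp hx.2).2⟩), hx.2⟩
    have hle := Finset.card_le_card hsub
    rwa [Finset.card_insert_of_notMem (fun hx => haH (Finset.mem_inter.mp hx).1)] at hle
  · have hH2B : ∀ x ∈ H₂, x ∉ B := by
      intro x hx hxB
      exact h2 ⟨x, Finset.mem_inter.mpr ⟨hx, hxB⟩⟩
    have e1 : H₂ ∩ (A \ B) = H₂ ∩ A := by
      ext x
      simp only [Finset.mem_inter, Finset.mem_sdiff]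
      exact ⟨fun h => ⟨h.1, h.2.1⟩, fun h => ⟨h.1, h.2, hH2B x h.1⟩⟩
    rw [e1]
    have key : (H₂ \ A).card ≤ (H₁ \ A).card := by
      apply Finset.card_le_card
      intro x hx
      rw [Finset.mem_sdiff] at hx ⊢
      exact ⟨hA' (Finset.mem_sdiff.mpr ⟨hH₂ hx.1, hx.2⟩), hx.2⟩
    have c1 : (H₁ ∩ A).card + (H₁ \ A).card = H₁.card :=
      Finset.card_inter_add_card_sdiff H₁ A
    have c2 : (H₂ ∩ A).card + (H₂ \ A).card = H₂.card :=
      Finset.card_inter_add_card_sdiff H₂ A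
    have hsub : insert b (H₁ ∩ (A \ B)) ⊆ H₁ ∩ A := by
      intro x hx
      rw [Finset.mem_insert] at hx
      rcases hx with rfl | hx
      · exact Finset.mem_inter.mpr ⟨hbH, hbA⟩
      · rw [Finset.mem_inter] at hx ⊢
        exact ⟨hx.1, (Finset.mem_sdiff.mp hx.2).1⟩
    have c3 : (H₁ ∩ (A \ B)).card + 1 ≤ (H₁ ∩ A).card := by
      have hle := Finset.card_le_card hsub
      rwa [Finset.card_insert_of_notMem
        (fun hx => (Finset.mem_sdiff.mp (Finset.mem_inter.mp hx).2).2 hbB)] at hle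
    omega

theorem aux_dense_subset {V : Type*} [Fintype V] [DecidableEq V]
    (E : Finset (Finset V)) (δ : ℕ)
    (Hd₁ Hd₂ : Finset V → Finset V)
    (h₁ : Egalitarian E δ Hd₁) (h₂ : Egalitarian E δ Hd₂) (k : ℕ) :
    denseSet E Hd₁ k ⊆ denseSet E Hd₂ k := by
  classical
  by_contra hcon
  obtain ⟨v, hvA, hvB⟩ := Finset.not_subset.mp hcon
  set A := denseSet E Hd₁ k with hAdef
  set B := denseSet E Hd₂ k with hBdef
  set X := A \ B with hXdef
  have hvX : v ∈ X := Finset.mem_sdiff.mpr ⟨hvA, hvB⟩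
  -- closure properties
  have hAclose : ∀ e ∈ E, (Hd₁ e ∩ A).Nonempty → e \ A ⊆ Hd₁ e := by
    intro e he hne x hx
    rw [Finset.mem_sdiff] at hx
    by_contra hxH
    obtain ⟨b, hb⟩ := hne
    rw [Finset.mem_inter] at hb
    exact hx.2 (aux_denseSet_closed he hx.1 hxH hb.1 hb.2)
  have hBclose : ∀ e ∈ E, (Hd₂ e ∩ B).Nonempty → e \ B ⊆ Hd₂ e := by
    intro e he hne x hx
    rw [Finset.mem_sdiff] at hx
    by_contra hxH
    obtain ⟨b, hb⟩ := hne
    rw [Finset.mem_inter] at hb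
    exact hx.2 (aux_denseSet_closed he hx.1 hxH hb.1 hb.2)
  -- per-edge inequality
  have hper : ∀ e ∈ E, (Hd₁ e ∩ X).card ≤ (Hd₂ e ∩ X).card := by
    intro e he
    have o1 := h₁.1 e he
    have o2 := h₂.1 e he
    exact aux_card_head_le o1.1 o2.1 (o1.2.trans o2.2.symm) (hAclose e he) (hBclose e he)
  -- indegree bounds
  have hub : ∀ u ∈ X, indeg E Hd₂ u ≤ k - 1 ∧ 1 ≤ k := by
    intro u hu
    have huB : u ∉ B := (Finset.mem_sdiff.mp hu).2
    have : ¬ k ≤ indeg E Hd₂ u := fun h => huB (aux_mem_denseSet.mpr (Or.inl h))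
    omega
  have hlb : ∀ u ∈ X, k - 1 ≤ indeg E Hd₁ u := by
    intro u hu
    have := aux_indeg_lb h₁ (Finset.mem_sdiff.mp hu).1
    omega
  have hS2 : ∑ u ∈ X, indeg E Hd₂ u ≤ (k - 1) * X.card := by
    calc ∑ u ∈ X, indeg E Hd₂ u ≤ ∑ _u ∈ X, (k - 1) :=
          Finset.sum_le_sum fun u hu => (hub u hu).1
      _ = (k - 1) * X.card := by rw [Finset.sum_const, smul_eq_mul, Nat.mul_comm]
  have hS1 : (k - 1) * X.card ≤ ∑ u ∈ X, indeg E Hd₁ u := by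
    calc (k - 1) * X.card = ∑ _u ∈ X, (k - 1) := by
          rw [Finset.sum_const, smul_eq_mul, Nat.mul_comm]
      _ ≤ ∑ u ∈ X, indeg E Hd₁ u := Finset.sum_le_sum hlb
  have hsum1 := aux_sum_indeg E Hd₁ X
  have hsum2 := aux_sum_indeg E Hd₂ X
  by_cases hbig : ∃ u ∈ X, k ≤ indeg E Hd₁ u
  · obtain ⟨w, hw, hwk⟩ := hbig
    have h1k : 1 ≤ k := (hub w hw).2
    have hstrict : (k - 1) * X.card < ∑ u ∈ X, indeg E Hd₁ u := by
      have : ∑ _u ∈ X, (k - 1) < ∑ u ∈ X, indeg E Hd₁ u :=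
        Finset.sum_lt_sum hlb ⟨w, hw, by omega⟩
      calc (k - 1) * X.card = ∑ _u ∈ X, (k - 1) := by
            rw [Finset.sum_const, smul_eq_mul, Nat.mul_comm]
        _ < _ := this
    have hcmp : ∑ u ∈ X, indeg E Hd₁ u ≤ ∑ u ∈ X, indeg E Hd₂ u := by
      rw [hsum1, hsum2]
      exact Finset.sum_le_sum hper
    omega
  · push_neg at hbig
    have hS1B : ∀ s, k ≤ indeg E Hd₁ s → s ∈ B := by
      intro s hs
      by_contra hsB
      have hsA : s ∈ A := aux_mem_denseSet.mpr (Or.inl hs)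
      exact absurd hs (Nat.not_le.mpr (hbig s (Finset.mem_sdiff.mpr ⟨hsA, hsB⟩)))
    have hvsmall : ¬ k ≤ indeg E Hd₁ v := Nat.not_le.mpr (hbig v hvX)
    rcases aux_mem_denseSet.mp hvA with hk | ⟨s, hs, l, u, f, hl, h0, hlast, hstep⟩
    · exact hvsmall hk
    · have hlB : u l ∈ B := by rw [hlast]; exact hS1B s hs
      have hex : ∃ m, u m ∈ B := ⟨l, hlB⟩
      set m := Nat.find hex with hmdef
      have hmB : u m ∈ B := Nat.find_spec hex
      have hmin : ∀ j < m, u j ∉ B := fun j hj => Nat.find_min hex hj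
      have hm0 : 1 ≤ m := by
        rcases Nat.eq_zero_or_pos m with h0m | h0m
        · rw [h0m] at hmB; rw [h0] at hmB; exact absurd hmB hvB
        · exact h0m
      have hml : m ≤ l := Nat.find_min' hex hlB
      set j := m - 1 with hjdef
      have hjl : j < l := by omega
      have hjm : j + 1 = m := by omega
      -- facts about the crossing step
      obtain ⟨hfE, hjf, hjH, hj1H⟩ := hstep j hjl
      have hjB : u j ∉ B := hmin j (by omega)
      have hjA : u j ∈ A := by
        have hr : Reaches E Hd₁ (u j) (u l) := aux_reaches_suffix hstep hjl
        rw [hlast] at hr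
        exact aux_mem_denseSet.mpr (Or.inr ⟨s, hs, hr⟩)
      have hj1A : u (j + 1) ∈ A := by
        rcases Nat.lt_or_ge m l with hml' | hml'
        · have hr : Reaches E Hd₁ (u m) (u l) := aux_reaches_suffix hstep hml'
          rw [hlast] at hr
          rw [hjm]
          exact aux_mem_denseSet.mpr (Or.inr ⟨s, hs, hr⟩)
        · have : m = l := by omega
          rw [hjm, this, hlast]
          exact aux_mem_denseSet.mpr (Or.inl hs)
      have hj1B : u (j + 1) ∈ B := by rw [hjm]; exact hmB
      -- strict per-edge inequality at f j
      have hstrictEdge : (Hd₁ (f j) ∩ X).card + 1 ≤ (Hd₂ (f j) ∩ X).card := by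
        have o1 := h₁.1 (f j) hfE
        have o2 := h₂.1 (f j) hfE
        exact aux_card_head_lt o1.1 o2.1 (o1.2.trans o2.2.symm)
          (hAclose (f j) hfE) (hBclose (f j) hfE)
          hjf hjH hjA hjB hj1H hj1A hj1B
      have hcmp : ∑ u ∈ X, indeg E Hd₁ u < ∑ u ∈ X, indeg E Hd₂ u := by
        rw [hsum1, hsum2]
        exact Finset.sum_lt_sum hper ⟨f j, hfE, by omega⟩
      have h1k : 1 ≤ k := (hub v hvX).2
      omega

end AuxProof


/-- the `(k,δ)`-dense subhypergraph is independent of the choice of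
egalitarian `δ`-orientation. -/
theorem stmt9 {V : Type*} [Fintype V] [DecidableEq V]
    (E : Finset (Finset V)) (hE : ∀ e ∈ E, e.Nonempty)
    (δ : ℕ) (hδ : 1 ≤ δ)
    (Hd₁ Hd₂ : Finset V → Finset V)
    (h₁ : Egalitarian E δ Hd₁) (h₂ : Egalitarian E δ Hd₂) (k : ℕ) :
    denseSet E Hd₁ k = denseSet E Hd₂ k :=
  Finset.Subset.antisymm (aux_dense_subset E δ Hd₁ Hd₂ h₁ h₂ k)
    (aux_dense_subset E δ Hd₂ Hd₁ h₂ h₁ k)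
end

section
/- Let H = (V, E) be a hypergraph with an egalitarian δ-orientation and let k be a non-negative integer. If the (k,δ)-dense subhypergraph D_{k,δ} is nonempty, then its indegree-based density satisfies ρ_d(D_{k,δ}) > k − 1. -/
open Finset

/-- if `D_{k,δ}` is nonempty then `ρ_d(D_{k,δ}) > k - 1`. -/
theorem stmt12 {V : Type*} [Fintype V] [DecidableEq V]
    (E : Finset (Finset V)) (hE : ∀ e ∈ E, e.Nonempty)
    (δ : ℕ) (hδ : 1 ≤ δ)
    (Hd : Finset V → Finset V) (hega : Egalitarian E δ Hd) (k : ℕ)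
    (hD : (denseSet E Hd k).Nonempty) :
    (k : ℝ) - 1 < rhod E Hd (denseSet E Hd k) := by

  classical
  set X := denseSet E Hd k with hX
  have hcard : 0 < (X.card : ℝ) := by exact_mod_cast Finset.card_pos.mpr hD
  rw [rhod, lt_div_iff₀ hcard]
  -- every vertex of X has indeg ≥ k - 1 (as reals)
  have hmem : ∀ u ∈ X, (k : ℝ) - 1 ≤ (indeg E Hd u : ℝ) := by
    intro u hu
    rw [hX, denseSet, Finset.mem_filter] at hu
    rcases hu.2 with h | ⟨s, hs, hr⟩
    · have : (k : ℝ) ≤ indeg E Hd u := by exact_mod_cast h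
      linarith
    · have h2 := hega.2 u s hr
      have h3 : k < indeg E Hd u + 2 := lt_of_le_of_lt hs h2
      have h4 : k ≤ indeg E Hd u + 1 := by omega
      have : (k : ℝ) ≤ (indeg E Hd u : ℝ) + 1 := by exact_mod_cast h4
      linarith
  rcases Nat.eq_zero_or_pos k with hk | hk
  · subst hk
    have hsum : (0 : ℝ) ≤ ∑ x ∈ X, (indeg E Hd x : ℝ) :=
      Finset.sum_nonneg fun x _ => by positivity
    simp only [Nat.cast_zero]
    nlinarith
  · -- there exists s ∈ X with indeg s ≥ k
    obtain ⟨u, hu⟩ := hD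
    have hu' := hu
    rw [hX, denseSet, Finset.mem_filter] at hu'
    have ⟨s, hsX, hsk⟩ : ∃ s ∈ X, k ≤ indeg E Hd s := by
      rcases hu'.2 with h | ⟨s, hs, hr⟩
      · exact ⟨u, hu, h⟩
      · refine ⟨s, ?_, hs⟩
        rw [hX, denseSet, Finset.mem_filter]
        exact ⟨Finset.mem_univ s, Or.inl hs⟩
    have hlt : ∑ x ∈ X, ((k : ℝ) - 1) < ∑ x ∈ X, (indeg E Hd x : ℝ) := by
      refine Finset.sum_lt_sum hmem ⟨s, hsX, ?_⟩
      have : (k : ℝ) ≤ (indeg E Hd s : ℝ) := by exact_mod_cast hsk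
      linarith
    rw [Finset.sum_const, nsmul_eq_mul] at hlt
    linarith [hlt]
end

section
/- Let H = (V, E) be a hypergraph with an egalitarian 1-orientation (δ = 1) and let k be a non-negative integer. If the (k,1)-dense subhypergraph D_{k,1} is nonempty, then its degree-density dominates its indegree-based density: ρ(D_{k,1}) ≥ ρ_d(D_{k,1}). -/
open Finset

section Aux

variable {V : Type*}

lemma step_reach (E : Finset (Finset V)) (Hd : Finset V → Finset V) {u h : V}
    {e : Finset V} (he : e ∈ E) (hu : u ∈ e) (hun : u ∉ Hd e) (hh : h ∈ Hd e) :
    Reaches E Hd u h := by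
  refine ⟨1, fun i => if i = 0 then u else h, fun _ => e, le_refl 1, by simp, by simp, ?_⟩
  intro i hi
  interval_cases i
  simp [he, hu, hun, hh]

lemma prepend_reach (E : Finset (Finset V)) (Hd : Finset V → Finset V) {u h s : V}
    {e : Finset V} (he : e ∈ E) (hu : u ∈ e) (hun : u ∉ Hd e) (hh : h ∈ Hd e)
    (hr : Reaches E Hd h s) : Reaches E Hd u s := by
  obtain ⟨l, w, f, hl, h0, hlast, hstep⟩ := hr
  refine ⟨l + 1, fun i => if i = 0 then u else w (i - 1),
    fun i => if i = 0 then e else f (i - 1), by omega, by simp, by simp [hlast], ?_⟩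
  intro i hi
  rcases Nat.eq_zero_or_pos i with h0' | hpos
  · subst h0'
    simpa [he, hu, hun, h0] using hh
  · obtain ⟨j, rfl⟩ : ∃ j, i = j + 1 := ⟨i - 1, by omega⟩
    have := hstep j (by omega)
    simpa using this

lemma head_in_dense [Fintype V] [DecidableEq V] (E : Finset (Finset V))
    (Hd : Finset V → Finset V) (k : ℕ) {e : Finset V} (he : e ∈ E)
    {h : V} (hh : h ∈ Hd e) (hhD : h ∈ denseSet E Hd k) {u : V} (hu : u ∈ e)
    (hun : u ∉ Hd e) : u ∈ denseSet E Hd k := by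
  simp only [denseSet, Finset.mem_filter, Finset.mem_univ, true_and] at hhD ⊢
  rcases hhD with hk | ⟨s, hks, hrs⟩
  · exact Or.inr ⟨h, hk, step_reach E Hd he hu hun hh⟩
  · exact Or.inr ⟨s, hks, prepend_reach E Hd he hu hun hh hrs⟩

lemma edge_sub_dense [Fintype V] [DecidableEq V] (E : Finset (Finset V))
    (Hd : Finset V → Finset V) (hega : Egalitarian E 1 Hd) (hE : ∀ e ∈ E, e.Nonempty)
    (k : ℕ) {e : Finset V} (he : e ∈ E) {h : V} (hh : h ∈ Hd e)
    (hhD : h ∈ denseSet E Hd k) : e ⊆ denseSet E Hd k := by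
  intro u hu
  by_cases hun : u ∈ Hd e
  · have hcard : (Hd e).card = 1 := by
      have := (hega.1 e he).2
      rw [this]; exact Nat.min_eq_left (hE e he).card_pos
    obtain ⟨a, ha⟩ := Finset.card_eq_one.mp hcard
    rw [ha, Finset.mem_singleton] at hh hun
    rw [hun, ← hh]; exact hhD
  · exact head_in_dense E Hd k he hh hhD hu hun

end Aux

/-- for an egalitarian `1`-orientation, if `D_{k,1}` is nonempty then
its degree-density dominates its indegree-based density: `ρ(D_{k,1}) ≥ ρ_d(D_{k,1})`. -/
theorem stmt13 {V : Type*} [Fintype V] [DecidableEq V]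
    (E : Finset (Finset V)) (hE : ∀ e ∈ E, e.Nonempty)
    (Hd : Finset V → Finset V) (hega : Egalitarian E 1 Hd) (k : ℕ)
    (hD : (denseSet E Hd k).Nonempty) :
    rhod E Hd (denseSet E Hd k) ≤ rho E (denseSet E Hd k) := by

  classical
  set D := denseSet E Hd k with hDdef
  have hkey : ∑ x ∈ D, indeg E Hd x ≤
      ∑ x ∈ D, ((edgesIn E D).filter fun e => x ∈ e).card := by
    have h1 : ∑ x ∈ D, indeg E Hd x = ∑ e ∈ E, (D.filter fun x => x ∈ Hd e).card := by
      simp_rw [indeg, Finset.card_filter]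
      rw [Finset.sum_comm]
    have h2 : ∑ x ∈ D, ((edgesIn E D).filter fun e => x ∈ e).card
        = ∑ e ∈ edgesIn E D, (D.filter fun x => x ∈ e).card := by
      simp_rw [Finset.card_filter]
      rw [Finset.sum_comm]
    rw [h1, h2]
    rw [← Finset.sum_subset (Finset.filter_subset _ E)
      (f := fun e => (D.filter fun x => x ∈ Hd e).card)
      (by
        intro e heE heI
        rw [Finset.card_eq_zero, Finset.filter_eq_empty_iff]
        intro x hxD hxHd
        exact heI (by
          simp only [edgesIn, Finset.mem_filter]
          exact ⟨heE, edge_sub_dense E Hd hega hE k heE hxHd hxD⟩))]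
    refine Finset.sum_le_sum ?_
    intro e he
    exact Finset.card_le_card (Finset.filter_subset_filter _
      (Finset.Subset.refl D) |>.trans (le_refl _)) |>.trans (le_refl _) |>.trans
      (Finset.card_le_card (Finset.monotone_filter_right D
        (fun x _ hx => (hega.1 e (Finset.mem_of_mem_filter e he)).1 hx)))
  rw [rhod, rho, div_le_div_iff_of_pos_right (by exact_mod_cast hD.card_pos)]
  exact_mod_cast hkey
end

section
/- Let H = (V, E) be a hypergraph with an egalitarian δ-orientation, let k be a non-negative integer, and suppose the (k,δ)-dense subhypergraph D_{k,δ} is nonempty. Then ρ_d(D_{k,δ}) ≥ (k − 1) + f_k, where f_k = |S_k|/|D_{k,δ}| is the fraction of vertices of indegree at least k within D_{k,δ}. -/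
open Finset

/-- if `D_{k,δ}` is nonempty then `ρ_d(D_{k,δ}) ≥ (k - 1) + f_k`,
where `f_k = |S_k|/|D_{k,δ}|`. -/
theorem stmt14 {V : Type*} [Fintype V] [DecidableEq V]
    (E : Finset (Finset V)) (hE : ∀ e ∈ E, e.Nonempty)
    (δ : ℕ) (hδ : 1 ≤ δ)
    (Hd : Finset V → Finset V) (hega : Egalitarian E δ Hd) (k : ℕ)
    (hD : (denseSet E Hd k).Nonempty) :
    ((k : ℝ) - 1) + fk E Hd k ≤ rhod E Hd (denseSet E Hd k) := by
  classical
  have hcard : (0:ℝ) < ((denseSet E Hd k).card : ℝ) := by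
    exact_mod_cast Finset.card_pos.mpr hD
  have hsub : Sk E Hd k ⊆ denseSet E Hd k := by
    intro x hx
    simp only [Sk, Finset.mem_filter, Finset.mem_univ, true_and] at hx
    simp only [denseSet, Finset.mem_filter, Finset.mem_univ, true_and]
    exact Or.inl hx
  have hpt : ∀ x ∈ denseSet E Hd k,
      ((k:ℝ) - 1) + (if x ∈ Sk E Hd k then (1:ℝ) else 0) ≤ (indeg E Hd x : ℝ) := by
    intro x hx
    by_cases hxS : x ∈ Sk E Hd k
    · simp only [hxS, if_true]
      have h1 : k ≤ indeg E Hd x := by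
        simpa [Sk] using hxS
      have h2 := (Nat.cast_le (α := ℝ)).mpr h1
      push_cast at h2
      linarith
    · simp only [hxS, if_false, add_zero]
      have hxS' : ¬ k ≤ indeg E Hd x := by simpa [Sk] using hxS
      have hx' : k ≤ indeg E Hd x ∨ ∃ s, k ≤ indeg E Hd s ∧ Reaches E Hd x s := by
        simpa [denseSet] using hx
      rcases hx' with h | ⟨s, hs, hr⟩
      · exact absurd h hxS'
      · have hlt := hega.2 x s hr
        have hk : k ≤ indeg E Hd x + 1 := by omega
        have h2 := (Nat.cast_le (α := ℝ)).mpr hk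
        push_cast at h2
        linarith
  have hsum : ((k:ℝ)-1) * ((denseSet E Hd k).card : ℝ) + ((Sk E Hd k).card : ℝ) ≤
      ∑ x ∈ denseSet E Hd k, (indeg E Hd x : ℝ) := by
    have hle := Finset.sum_le_sum hpt
    rw [Finset.sum_add_distrib] at hle
    have h1 : ∑ _x ∈ denseSet E Hd k, ((k:ℝ)-1) = ((k:ℝ)-1) * ((denseSet E Hd k).card : ℝ) := by
      rw [Finset.sum_const, nsmul_eq_mul, mul_comm]
    have h2 : ∑ x ∈ denseSet E Hd k, (if x ∈ Sk E Hd k then (1:ℝ) else 0)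
        = ((Sk E Hd k).card : ℝ) := by
      rw [Finset.sum_ite_mem, Finset.inter_eq_right.mpr hsub, Finset.sum_const,
        nsmul_eq_mul, mul_one]
    rw [h1, h2] at hle
    exact hle
  rw [rhod, fk, le_div_iff₀ hcard, add_mul, div_mul_cancel₀ _ (ne_of_gt hcard)]
  exact hsum
end

section
/- Let H = (V, E) be a hypergraph with an egalitarian δ-orientation, let k be a non-negative integer, and suppose the (k,δ)-dense subhypergraph D_{k,δ} is nonempty. Then ρ(D_{k,δ}) ≥ θ(D_{k,δ})·((k − 1) + f_k), where θ(D_{k,δ}) is the internalization coefficient of D_{k,δ} and f_k = |S_k|/|D_{k,δ}|. -/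
open Finset

/-- if `D_{k,δ}` is nonempty then
`ρ(D_{k,δ}) ≥ θ(D_{k,δ})·((k - 1) + f_k)`. -/
theorem stmt16 {V : Type*} [Fintype V] [DecidableEq V]
    (E : Finset (Finset V)) (hE : ∀ e ∈ E, e.Nonempty)
    (δ : ℕ) (hδ : 1 ≤ δ)
    (Hd : Finset V → Finset V) (hega : Egalitarian E δ Hd) (k : ℕ)
    (hD : (denseSet E Hd k).Nonempty) :
    theta E Hd (denseSet E Hd k) * (((k : ℝ) - 1) + fk E Hd k) ≤
      rho E (denseSet E Hd k) := by
  classical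
  set D := denseSet E Hd k with hDdef
  have hDC : (0:ℝ) < (D.card : ℝ) := by exact_mod_cast Finset.card_pos.mpr hD
  have hSD : Sk E Hd k ⊆ D := by
    intro x hx
    simp only [Sk, Finset.mem_filter] at hx
    simp only [hDdef, denseSet, Finset.mem_filter]
    exact ⟨Finset.mem_univ x, Or.inl hx.2⟩
  -- rho numerator equals sum of edge sizes
  have hrho : ∑ x ∈ D, (((edgesIn E D).filter fun e => x ∈ e).card : ℝ)
      = ∑ e ∈ edgesIn E D, (e.card : ℝ) := by
    have h1 : ∀ x ∈ D, (((edgesIn E D).filter fun e => x ∈ e).card : ℝ)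
        = ∑ e ∈ edgesIn E D, (if x ∈ e then (1:ℝ) else 0) := by
      intro x _
      rw [Finset.sum_boole]
    rw [Finset.sum_congr rfl h1, Finset.sum_comm]
    refine Finset.sum_congr rfl fun e he => ?_
    have heD : e ⊆ D := (Finset.mem_filter.mp he).2
    rw [Finset.sum_boole]
    congr 1
    rw [Finset.filter_mem_eq_inter, Finset.inter_eq_right.mpr heD]
  -- head cards bounded by edge cards
  have hAN : ∑ e ∈ edgesIn E D, ((Hd e).card : ℝ) ≤ ∑ e ∈ edgesIn E D, (e.card : ℝ) := by
    refine Finset.sum_le_sum fun e he => ?_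
    have heE : e ∈ E := (Finset.mem_filter.mp he).1
    exact_mod_cast Finset.card_le_card (hega.1 e heE).1
  -- indegree lower bound
  have hkey : ∀ x ∈ D, ((k:ℝ) - 1) + (if x ∈ Sk E Hd k then (1:ℝ) else 0)
      ≤ (indeg E Hd x : ℝ) := by
    intro x hx
    by_cases hxS : x ∈ Sk E Hd k
    · have h : k ≤ indeg E Hd x := (Finset.mem_filter.mp hxS).2
      have h' : (k:ℝ) ≤ (indeg E Hd x : ℝ) := by exact_mod_cast h
      simp only [hxS, if_pos]
      linarith
    · simp only [hxS, if_neg, not_false_iff]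
      have hx' : k ≤ indeg E Hd x ∨ ∃ s, k ≤ indeg E Hd s ∧ Reaches E Hd x s := by
        have hx2 : x ∈ denseSet E Hd k := hx
        simp only [denseSet, Finset.mem_filter] at hx2
        exact hx2.2
      rcases hx' with h | ⟨s, hs, hr⟩
      · have h' : (k:ℝ) ≤ (indeg E Hd x : ℝ) := by exact_mod_cast h
        linarith
      · have h2 := hega.2 x s hr
        have h3 : k ≤ indeg E Hd x + 1 := by omega
        have h' : (k:ℝ) ≤ (indeg E Hd x : ℝ) + 1 := by exact_mod_cast h3
        linarith
  have hB : ((k:ℝ) - 1) * (D.card : ℝ) + ((Sk E Hd k).card : ℝ)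
      ≤ ∑ x ∈ D, (indeg E Hd x : ℝ) := by
    have h := Finset.sum_le_sum hkey
    rw [Finset.sum_add_distrib, Finset.sum_const, Finset.sum_boole,
      Finset.filter_mem_eq_inter, Finset.inter_eq_right.mpr hSD,
      nsmul_eq_mul] at h
    linarith
  -- abbreviations
  set A := ∑ e ∈ edgesIn E D, ((Hd e).card : ℝ) with hAdef
  set B := ∑ x ∈ D, (indeg E Hd x : ℝ) with hBdef
  set N := ∑ e ∈ edgesIn E D, (e.card : ℝ) with hNdef
  have hA0 : (0:ℝ) ≤ A := Finset.sum_nonneg fun e _ => by positivity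
  have hN0 : (0:ℝ) ≤ N := Finset.sum_nonneg fun e _ => by positivity
  have hB0 : (0:ℝ) ≤ B := Finset.sum_nonneg fun x _ => by positivity
  rw [theta, rho, fk, hrho]
  show A / B * (((k:ℝ) - 1) + ((Sk E Hd k).card : ℝ) / (D.card : ℝ)) ≤ N / (D.card : ℝ)
  rcases hB0.eq_or_lt with hBz | hBpos
  · rw [← hBz, div_zero, zero_mul]
    exact div_nonneg hN0 hDC.le
  · set C := ((k:ℝ) - 1) + ((Sk E Hd k).card : ℝ) / (D.card : ℝ) with hCdef
    by_cases hC : C ≤ 0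
    · have h1 : A / B * C ≤ 0 :=
        mul_nonpos_of_nonneg_of_nonpos (div_nonneg hA0 hBpos.le) hC
      have h2 : (0:ℝ) ≤ N / (D.card : ℝ) := div_nonneg hN0 hDC.le
      linarith
    · push_neg at hC
      have hCD : C * (D.card : ℝ) ≤ B := by
        have h1 : C * (D.card : ℝ)
            = ((k:ℝ) - 1) * (D.card : ℝ) + ((Sk E Hd k).card : ℝ) := by
          rw [hCdef, add_mul, div_mul_cancel₀ _ hDC.ne']
        linarith
      rw [div_mul_eq_mul_div, div_le_div_iff₀ hBpos hDC]
      nlinarith [mul_le_mul_of_nonneg_left hCD hA0,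
        mul_le_mul_of_nonneg_right hAN hBpos.le]
end

section
/- Let H = (V, E) be a hypergraph with an egalitarian δ-orientation, let k ≥ 1 be an integer, and suppose the (k,δ)-dense subhypergraph D_{k,δ} is nonempty. Then vol(D_{k,δ}) > 0 and the conductance satisfies φ(D_{k,δ}) ≤ 1 − θ(D_{k,δ})·((k − 1) + f_k)/d̄(D_{k,δ}), where θ(D_{k,δ}) is the internalization coefficient, f_k = |S_k|/|D_{k,δ}|, and d̄(D_{k,δ}) = vol(D_{k,δ})/|D_{k,δ}|. -/
open Finset

/-- for `k ≥ 1`, if `D_{k,δ}` is nonempty then `vol(D_{k,δ}) > 0` and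
`φ(D_{k,δ}) ≤ 1 - θ(D_{k,δ})·((k - 1) + f_k)/d̄(D_{k,δ})`. -/
theorem stmt19 {V : Type*} [Fintype V] [DecidableEq V]
    (E : Finset (Finset V)) (hE : ∀ e ∈ E, e.Nonempty)
    (δ : ℕ) (hδ : 1 ≤ δ)
    (Hd : Finset V → Finset V) (hega : Egalitarian E δ Hd)
    (k : ℕ) (hk : 1 ≤ k)
    (hD : (denseSet E Hd k).Nonempty) :
    0 < vol E (denseSet E Hd k) ∧
      phi E (denseSet E Hd k) ≤
        1 - theta E Hd (denseSet E Hd k) * (((k : ℝ) - 1) + fk E Hd k) /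
          dbar E (denseSet E Hd k) := by
  classical
  set D := denseSet E Hd k with hDdef
  -- every vertex of D has indegree at least k-1
  have hind : ∀ u ∈ D, k ≤ indeg E Hd u + 1 := by
    intro u hu
    simp only [hDdef, denseSet, Finset.mem_filter] at hu
    rcases hu.2 with h | ⟨s, hs, hr⟩
    · omega
    · have := hega.2 u s hr
      omega
  have hSsub : Sk E Hd k ⊆ D := by
    intro u hu
    simp only [Sk, Finset.mem_filter] at hu
    simp only [hDdef, denseSet, Finset.mem_filter]
    exact ⟨Finset.mem_univ u, Or.inl hu.2⟩
  -- lower bound on total indegree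
  have hB : (k - 1) * D.card + (Sk E Hd k).card ≤ ∑ x ∈ D, indeg E Hd x := by
    have h1 : ∑ x ∈ D, ((k - 1) + if x ∈ Sk E Hd k then 1 else 0)
        = (k - 1) * D.card + (Sk E Hd k).card := by
      rw [Finset.sum_add_distrib, Finset.sum_const, smul_eq_mul, mul_comm]
      congr 1
      rw [Finset.sum_ite_mem, Finset.inter_eq_right.mpr hSsub, Finset.sum_const,
        smul_eq_mul, mul_one]
    rw [← h1]
    apply Finset.sum_le_sum
    intro x hx
    have h2 := hind x hx
    by_cases hxS : x ∈ Sk E Hd k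
    · rw [if_pos hxS]
      simp only [Sk, Finset.mem_filter] at hxS
      omega
    · simp only [if_neg hxS]
      omega
  -- vol as an edge sum
  have hvol : vol E D = ∑ e ∈ E, (e ∩ D).card := by
    unfold vol degv
    simp_rw [Finset.card_filter]
    rw [Finset.sum_comm]
    apply Finset.sum_congr rfl
    intro e _
    rw [← Finset.card_filter, Finset.filter_mem_eq_inter, Finset.inter_comm]
  -- key counting inequality
  have hAdv : (∑ e ∈ edgesIn E D, (Hd e).card) + boundaryCount E D ≤ vol E D := by
    rw [hvol]
    unfold edgesIn boundaryCount
    rw [Finset.sum_filter, Finset.card_filter, ← Finset.sum_add_distrib]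
    apply Finset.sum_le_sum
    intro e he
    by_cases hsub : e ⊆ D
    · have h1 : (Hd e).card ≤ e.card := Finset.card_le_card (hega.1 e he).1
      have h2 : e ∩ D = e := Finset.inter_eq_left.mpr hsub
      have h3 : ¬ ((e ∩ D).Nonempty ∧ (e \ D).Nonempty) := by
        rintro ⟨-, x, hx⟩
        rw [Finset.mem_sdiff] at hx
        exact hx.2 (hsub hx.1)
      rw [if_pos hsub, if_neg h3, h2]
      omega
    · rw [if_neg hsub]
      by_cases h : (e ∩ D).Nonempty ∧ (e \ D).Nonempty
      · rw [if_pos h]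
        have := Finset.card_pos.mpr h.1
        omega
      · rw [if_neg h]
        omega
  -- positivity of volume
  have hvolpos : 0 < vol E D := by
    obtain ⟨u, hu⟩ := hD
    have hu' := hu
    simp only [hDdef, denseSet, Finset.mem_filter] at hu'
    have hdeg : 0 < degv E u := by
      rcases hu'.2 with h | ⟨s, hs, l, uu, ee, hl, h0, hl', hall⟩
      · have hk' : 0 < indeg E Hd u := lt_of_lt_of_le hk h
        unfold indeg at hk'
        obtain ⟨e, heme⟩ := Finset.card_pos.mp hk'
        rw [Finset.mem_filter] at heme
        have hue : u ∈ e := (hega.1 e heme.1).1 heme.2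
        exact Finset.card_pos.mpr ⟨e, Finset.mem_filter.mpr ⟨heme.1, hue⟩⟩
      · obtain ⟨heE, hue, -, -⟩ := hall 0 hl
        rw [h0] at hue
        exact Finset.card_pos.mpr ⟨ee 0, Finset.mem_filter.mpr ⟨heE, hue⟩⟩
    calc 0 < degv E u := hdeg
      _ ≤ vol E D := Finset.single_le_sum (fun _ _ => Nat.zero_le _) hu
  refine ⟨hvolpos, ?_⟩
  -- real-valued quantities
  set n : ℝ := (D.card : ℝ) with hn
  set v : ℝ := (vol E D : ℝ) with hv
  set A : ℝ := ∑ e ∈ edgesIn E D, ((Hd e).card : ℝ) with hA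
  set B : ℝ := ∑ x ∈ D, (indeg E Hd x : ℝ) with hBr
  set S : ℝ := ((Sk E Hd k).card : ℝ) with hS
  set bd : ℝ := (boundaryCount E D : ℝ) with hbd
  have hnpos : 0 < n := by
    have := Finset.card_pos.mpr hD
    positivity
  have hvpos : 0 < v := by rw [hv]; exact_mod_cast hvolpos
  have hApos : 0 ≤ A := Finset.sum_nonneg fun _ _ => by positivity
  have hBpos : 0 ≤ B := Finset.sum_nonneg fun _ _ => by positivity
  have hθ : 0 ≤ theta E Hd D := div_nonneg hApos hBpos
  have hθB : theta E Hd D * B ≤ A := by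
    by_cases hB0 : B = 0
    · rw [hB0, mul_zero]; exact hApos
    · rw [theta, ← hA, ← hBr, div_mul_cancel₀ _ hB0]
  have hCB : ((k : ℝ) - 1) * n + S ≤ B := by
    have := hB
    have hcast : (((k - 1) * D.card + (Sk E Hd k).card : ℕ) : ℝ)
        ≤ ((∑ x ∈ D, indeg E Hd x : ℕ) : ℝ) := by exact_mod_cast this
    push_cast [Nat.cast_sub hk] at hcast
    convert hcast using 2 <;> push_cast <;> ring
  have hθC : theta E Hd D * (((k : ℝ) - 1) * n + S) ≤ A :=
    le_trans (mul_le_mul_of_nonneg_left hCB hθ) hθB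
  have hAd : A + bd ≤ v := by
    have := hAdv
    have hcast : ((∑ e ∈ edgesIn E D, (Hd e).card : ℕ) : ℝ) + (boundaryCount E D : ℝ)
        ≤ ((vol E D : ℕ) : ℝ) := by exact_mod_cast this
    push_cast at hcast
    exact hcast
  have key : theta E Hd D * (((k : ℝ) - 1) + fk E Hd k) / dbar E D
      = theta E Hd D * (((k : ℝ) - 1) * n + S) / v := by
    rw [fk, dbar, ← hS, ← hn, ← hv]
    field_simp
  rw [key, phi, ← hbd, ← hv]
  rw [div_le_iff₀ hvpos, sub_mul, one_mul, div_mul_cancel₀ _ (ne_of_gt hvpos)]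
  linarith
end
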